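/- The polynomial R_<^ν(k;λ,μ) satisfies R_<^ν(k;λ,μ) = −R_<^ν(k;−λ−1−(ν₁+ν₂),μ). -/

import Mathlib

/-
The substitution `u ↦ -u` maps the circle `C(0, ε)` onto itself, keeping its orientation, while
`du ↦ -du`; so `∮ f(-u) du = -∮ f(u) du`. The character `φ` is even, hence `φ̇` is odd, `φ̈` is
even, and `(2 sinh (u/2))^(2g)` is even. Multiplying numerator and denominator of the integrand by
`-e^{-(u(k+2) + δφ̇(u))}` shows that replacing `λ` by `-λ-1-(ν₁+ν₂)` changes the integrand exactly
as replacing `u` by `-u` does. Hence the two contour integrals differ by a sign for every `δ`, and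
so do their `δ`-derivatives at `0`.
-/

open Complex

/-- The rank-2 character `φ(u) = sinh((d+1)u/2)/sinh(u/2)` where `d = ν₁ - ν₂`. -/
noncomputable def phiC (d : ℤ) (u : ℂ) : ℂ :=
  Complex.sinh (((d : ℂ) + 1) * u / 2) / Complex.sinh (u / 2)

/-- `φ̇ = 2 φ'`. -/
noncomputable def phiDot (d : ℤ) (u : ℂ) : ℂ := 2 * deriv (phiC d) u

/-- `φ̈ = 2 φ̇' = 4 φ''`. -/
noncomputable def phiDDot (d : ℤ) (u : ℂ) : ℂ := 2 * deriv (fun y => phiDot d y) u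


/-- `R_<^ν(k;λ,μ)`, with numerator `(e^{u(λ+μ+1)} − e^{u(λ−μ+k+2)+δφ̇(u)})
e^{u(ν₁+ν₂)/2}(2k+4+δφ̈(u))^g`. -/
noncomputable def Rlt (g k : ℕ) (ν₁ ν₂ : ℤ) (ε : ℝ) (l m : ℤ) : ℂ :=
  (-1 : ℂ) ^ g *
    deriv (fun δ : ℂ =>
      (2 * (Real.pi : ℂ) * Complex.I)⁻¹ *
        ∮ u in C(0, ε),
          (Complex.exp (u * ((l : ℂ) + (m : ℂ) + 1)) -
                Complex.exp (u * ((l : ℂ) - (m : ℂ) + (k : ℂ) + 2) + δ * phiDot (ν₁ - ν₂) u)) *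
              Complex.exp (u * ((ν₁ : ℂ) + (ν₂ : ℂ)) / 2) *
              (2 * (k : ℂ) + 4 + δ * phiDDot (ν₁ - ν₂) u) ^ g /
            ((2 * Complex.sinh (u / 2)) ^ (2 * g) *
              (1 - Complex.exp (u * ((k : ℂ) + 2) + δ * phiDot (ν₁ - ν₂) u)))) 0

section EvenOdd

variable {𝕜 F : Type*} [NontriviallyNormedField 𝕜] [NormedAddCommGroup F] [NormedSpace 𝕜 F]
  {f : 𝕜 → F}

theorem Function.Even.deriv (hf : f.Even) : (deriv f).Odd := fun x => by
  have h := deriv_comp_neg f x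
  simp only [hf.eq] at h
  rw [h, neg_neg]

theorem Function.Odd.deriv (hf : f.Odd) : (deriv f).Even := fun x => by
  have h := deriv_comp_neg f x
  simp only [hf.eq, deriv.fun_neg, neg_inj] at h
  exact h.symm

end EvenOdd

namespace circleIntegral

variable {E : Type*} [NormedAddCommGroup E] [NormedSpace ℂ E]

theorem integral_neg_radius (f : ℂ → E) (c : ℂ) (R : ℝ) :
    (∮ z in C(c, -R), f z) = ∮ z in C(c, R), f z := by
  set F : ℝ → E := fun θ => deriv (circleMap c R) θ • f (circleMap c R θ)
  have hper : F.Periodic (2 * Real.pi) := fun θ => by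
    simp only [F, deriv_circleMap, periodic_circleMap _ R θ]
  calc (∮ z in C(c, -R), f z) = ∫ θ in 0..2 * Real.pi, F (θ + Real.pi) := by
        refine intervalIntegral.integral_congr fun θ _ => ?_
        simp only [F, deriv_circleMap, circleMap_neg_radius]
    _ = ∫ θ in Real.pi..2 * Real.pi + Real.pi, F θ := by
        rw [intervalIntegral.integral_comp_add_right F Real.pi, zero_add]
    _ = ∮ z in C(c, R), f z := by
        rw [add_comm, hper.intervalIntegral_add_eq Real.pi 0, zero_add]; rfl

theorem integral_comp_neg (f : ℂ → E) (c : ℂ) (R : ℝ) :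
    (∮ z in C(c, R), f (-z)) = -∮ z in C(-c, R), f z := by
  rw [← integral_neg_radius f (-c) R, circleIntegral, circleIntegral,
    ← intervalIntegral.integral_neg]
  refine intervalIntegral.integral_congr fun θ _ => ?_
  have hneg : ∀ c' : ℂ, circleMap (-c') (-R) θ = -circleMap c' R θ := fun c' => by
    simp only [circleMap]; push_cast; ring
  have hneg0 : circleMap 0 (-R) θ = -circleMap 0 R θ := by simpa using hneg 0
  simp only [deriv_circleMap, hneg, hneg0, neg_mul, neg_smul, neg_neg]

end circleIntegral

namespace Complex

theorem exp_sub_exp_mul_exp_div_one_sub_exp {a b a' b' w z : ℂ}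
    (ha : a' = b - w + 2 * z) (hb : b' = a - w + 2 * z) :
    (exp a - exp b) * exp z / (1 - exp w) = (exp a' - exp b') * exp (-z) / (1 - exp (-w)) := by
  have hc : -exp (-w) ≠ 0 := neg_ne_zero.mpr (exp_ne_zero _)
  have hden : 1 - exp (-w) = -exp (-w) * (1 - exp w) := by
    rw [neg_mul, mul_sub, mul_one, ← exp_add, neg_add_cancel, exp_zero]; ring
  have hnum : (exp a' - exp b') * exp (-z) = -exp (-w) * ((exp a - exp b) * exp z) := by
    have hexp : ∀ x y : ℂ, x + -z = -w + (y + z) → exp x * exp (-z) = exp (-w) * (exp y * exp z) :=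
      fun x y h => by rw [← exp_add, ← exp_add, ← exp_add, h]
    rw [sub_mul, hexp a' b (by rw [ha]; ring), hexp b' a (by rw [hb]; ring)]
    ring
  rw [hnum, hden, mul_div_mul_left _ _ hc]

end Complex

theorem phiC_even (d : ℤ) : (phiC d).Even := fun u => by
  simp only [phiC, mul_neg, neg_div, sinh_neg, div_neg, neg_neg]

theorem phiDot_odd (d : ℤ) : (phiDot d).Odd :=
  (phiC_even d).deriv.const_smul (2 : ℂ)

theorem phiDDot_even (d : ℤ) : (phiDDot d).Even :=
  (phiDot_odd d).deriv.const_smul (2 : ℂ)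

noncomputable def rltIntegrand (g k : ℕ) (ν₁ ν₂ l m : ℤ) (δ u : ℂ) : ℂ :=
  (exp (u * ((l : ℂ) + (m : ℂ) + 1)) -
        exp (u * ((l : ℂ) - (m : ℂ) + (k : ℂ) + 2) + δ * phiDot (ν₁ - ν₂) u)) *
      exp (u * ((ν₁ : ℂ) + (ν₂ : ℂ)) / 2) *
      (2 * (k : ℂ) + 4 + δ * phiDDot (ν₁ - ν₂) u) ^ g /
    ((2 * sinh (u / 2)) ^ (2 * g) * (1 - exp (u * ((k : ℂ) + 2) + δ * phiDot (ν₁ - ν₂) u)))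

theorem Rlt_eq_deriv_circleIntegral (g k : ℕ) (ν₁ ν₂ : ℤ) (ε : ℝ) (l m : ℤ) :
    Rlt g k ν₁ ν₂ ε l m = (-1 : ℂ) ^ g *
      deriv (fun δ => (2 * (Real.pi : ℂ) * I)⁻¹ *
        ∮ u in C(0, ε), rltIntegrand g k ν₁ ν₂ l m δ u) 0 :=
  rfl

theorem rltIntegrand_reflect (g k : ℕ) (ν₁ ν₂ l m : ℤ) (δ u : ℂ) :
    rltIntegrand g k ν₁ ν₂ (-l - 1 - (ν₁ + ν₂)) m δ u = rltIntegrand g k ν₁ ν₂ l m δ (-u) := by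
  have hS : (2 * sinh (-u / 2)) ^ (2 * g) = (2 * sinh (u / 2)) ^ (2 * g) := by
    rw [neg_div, sinh_neg, mul_neg, (even_two_mul g).neg_pow]
  simp only [rltIntegrand, (phiDot_odd _).eq, (phiDDot_even _).eq, hS]
  generalize phiDot (ν₁ - ν₂) u = D
  generalize (2 * sinh (u / 2)) ^ (2 * g) = S
  generalize (2 * (k : ℂ) + 4 + δ * phiDDot (ν₁ - ν₂) u) ^ g = C
  have hz : -u * ((ν₁ : ℂ) + ν₂) / 2 = -(u * (ν₁ + ν₂) / 2) := by ring
  have hw : -u * ((k : ℂ) + 2) + δ * -D = -(u * (k + 2) + δ * D) := by ring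
  have hshape : ∀ X W : ℂ, X * C / (S * W) = X / W * C / S := fun X W => by
    rw [mul_comm S, ← div_div, mul_div_right_comm]
  rw [hz, hw, hshape, hshape]
  congr 2
  refine Complex.exp_sub_exp_mul_exp_div_one_sub_exp ?_ ?_ <;> push_cast <;> ring

theorem Rlt_reflect (g k : ℕ) (ν₁ ν₂ : ℤ) (ε : ℝ) (l m : ℤ) :
    Rlt g k ν₁ ν₂ ε l m = -Rlt g k ν₁ ν₂ ε (-l - 1 - (ν₁ + ν₂)) m := by
  have hcontour : ∀ δ, (∮ u in C(0, ε), rltIntegrand g k ν₁ ν₂ (-l - 1 - (ν₁ + ν₂)) m δ u) =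
      -∮ u in C(0, ε), rltIntegrand g k ν₁ ν₂ l m δ u := fun δ => by
    simp only [rltIntegrand_reflect, circleIntegral.integral_comp_neg, neg_zero]
  simp only [Rlt_eq_deriv_circleIntegral, hcontour, mul_neg, deriv.fun_neg, neg_neg]

theorem stmt4_general (g k : ℕ) (ν₁ ν₂ : ℤ) (l m : ℤ) :
    ∃ ε₀ > (0 : ℝ), ∀ ε : ℝ, 0 < ε → ε < ε₀ →
      Rlt g k ν₁ ν₂ ε l m = -Rlt g k ν₁ ν₂ ε (-l - 1 - (ν₁ + ν₂)) m :=
  ⟨1, one_pos, fun ε _ _ => Rlt_reflect g k ν₁ ν₂ ε l m⟩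

/-- `R_<^ν(k;λ,μ) = −R_<^ν(k;−λ−1−(ν₁+ν₂),μ)` (for all small `ε > 0`). -/
theorem stmt4 (g k : ℕ) (hg : 2 ≤ g) (hk : 0 < k) (ν₁ ν₂ : ℤ) (hν : ν₂ ≤ ν₁) (l m : ℤ) :
    ∃ ε₀ > (0 : ℝ), ∀ ε : ℝ, 0 < ε → ε < ε₀ →
      Rlt g k ν₁ ν₂ ε l m = -Rlt g k ν₁ ν₂ ε (-l - 1 - (ν₁ + ν₂)) m :=
  stmt4_general g k ν₁ ν₂ l m
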